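/- arXiv:2512.10897 — 3 statements merged into one kernel-verified Lean document; each statement's English description precedes it below -/
import Mathlib

section
/- Let d ≥ 1, T > 0, let K ⊆ ℝ^d × ℝ^d be a compact set and Ω ⊆ ℝ^d an open set. Let V : ℝ^d → ℝ be differentiable with Lipschitz gradient, and let (X, Ξ) : ℝ × (ℝ^d × ℝ^d) → ℝ^d × ℝ^d be jointly continuous and such that for every (x, ξ), the curve t ↦ (X(t,(x,ξ)), Ξ(t,(x,ξ))) solves X' = Ξ, Ξ' = −∇V(X) with initial condition (X(0), Ξ(0)) = (x, ξ). Assume the geometric condition: for every (x, ξ) ∈ K there exists t ∈ (0, T) with X(t,(x,ξ)) ∈ Ω. Then there exists a constant C > 0 such that for every (x, ξ) ∈ K one has ∫₀^T 1_Ω(X(t,(x,ξ))) dt ≥ C. -/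
/-!
The time spent in `Ω` is bounded below locally uniformly: if `X(t, z) ∈ Ω` for some
`t ∈ (0, T)`, then by joint continuity `X(s, z') ∈ Ω` for all `(s, z')` in a product
neighbourhood `(t - δ, t + δ) × U`, so every `z' ∈ U` spends time at least `2δ` in `Ω`.
Compactness of `K` turns these local bounds into a uniform one.
-/

open MeasureTheory Set Filter Topology

theorem IsCompact.exists_gt_forall_le_of_eventually {X α : Type*} [TopologicalSpace X]
    [LinearOrder α] [NoMaxOrder α] {K : Set X} (hK : IsCompact K) {f : X → α} {a : α}
    (h : ∀ x ∈ K, ∃ C > a, ∀ᶠ y in 𝓝 x, C ≤ f y) : ∃ C > a, ∀ x ∈ K, C ≤ f x := by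
  refine hK.induction_on (p := fun s => ∃ C > a, ∀ x ∈ s, C ≤ f x) ?_ ?_ ?_ ?_
  · obtain ⟨C, hC⟩ := exists_gt a
    exact ⟨C, hC, by simp⟩
  · exact fun s t hst ⟨C, hC, hCt⟩ => ⟨C, hC, fun x hx => hCt x (hst hx)⟩
  · rintro s t ⟨C, hC, hCs⟩ ⟨D, hD, hDt⟩
    refine ⟨min C D, lt_min hC hD, ?_⟩
    rintro x (hx | hx)
    · exact (min_le_left C D).trans (hCs x hx)
    · exact (min_le_right C D).trans (hDt x hx)
  · intro x hx
    obtain ⟨C, hC, hev⟩ := h x hx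
    exact ⟨{y | C ≤ f y}, mem_nhdsWithin_of_mem_nhds hev, C, hC, fun y hy => hy⟩

theorem eventually_le_measureReal_Ioc_inter_section {Z : Type*} [TopologicalSpace Z]
    {W : Set (ℝ × Z)} (hW : IsOpen W) {a b t : ℝ} (ht : t ∈ Ioo a b) {z : Z} (hz : (t, z) ∈ W) :
    ∃ ε > 0, ∀ᶠ z' in 𝓝 z, ε ≤ volume.real (Ioc a b ∩ {s | (s, z') ∈ W}) := by
  obtain ⟨u, hu, v, hv, huv⟩ := mem_nhds_prod_iff.mp (hW.mem_nhds hz)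
  obtain ⟨δ, hδ, hball⟩ := Metric.mem_nhds_iff.mp (inter_mem hu (Ioo_mem_nhds ht.1 ht.2))
  refine ⟨2 * δ, by positivity, eventually_of_mem hv fun z' hz' => ?_⟩
  have hsub : Metric.ball t δ ⊆ Ioc a b ∩ {s | (s, z') ∈ W} := fun s hs =>
    ⟨Ioo_subset_Ioc_self (hball hs).2, huv ⟨(hball hs).1, hz'⟩⟩
  calc 2 * δ = volume.real (Metric.ball t δ) := by
        rw [Real.volume_real_ball hδ.le]
    _ ≤ _ := measureReal_mono hsub
        ((measure_mono inter_subset_left).trans_lt measure_Ioc_lt_top).ne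

theorem intervalIntegral_indicator_one_comp {E : Type*} {U : Set E} {g : ℝ → E} {a b : ℝ}
    (hab : a ≤ b) (hU : MeasurableSet (g ⁻¹' U)) :
    ∫ t in a..b, U.indicator (fun _ => (1 : ℝ)) (g t) = volume.real (Ioc a b ∩ g ⁻¹' U) := by
  rw [intervalIntegral.integral_of_le hab]
  have hind : (fun t => U.indicator (fun _ => (1 : ℝ)) (g t)) = (g ⁻¹' U).indicator 1 := by
    funext t; exact (indicator_comp_right (x := t) g).symm
  rw [hind, setIntegral_indicator hU]
  simp [inter_comm]

theorem liouville_observability_general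
    {d : ℕ} {T : ℝ} (hT : 0 < T)
    (K : Set (EuclideanSpace ℝ (Fin d) × EuclideanSpace ℝ (Fin d)))
    (hK : IsCompact K)
    (Ω : Set (EuclideanSpace ℝ (Fin d))) (hΩ : IsOpen Ω)
    (Φ : ℝ → EuclideanSpace ℝ (Fin d) × EuclideanSpace ℝ (Fin d) →
      EuclideanSpace ℝ (Fin d) × EuclideanSpace ℝ (Fin d))
    (hΦcont : Continuous fun p : ℝ × (EuclideanSpace ℝ (Fin d) × EuclideanSpace ℝ (Fin d)) =>
      Φ p.1 p.2)
    (hGC : ∀ z ∈ K, ∃ t ∈ Ioo 0 T, (Φ t z).1 ∈ Ω) :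
    ∃ C > 0, ∀ z ∈ K,
      C ≤ ∫ t in (0:ℝ)..T, Ω.indicator (fun _ => (1:ℝ)) (Φ t z).1 := by
  refine hK.exists_gt_forall_le_of_eventually fun z hz => ?_
  obtain ⟨t, ht, htΩ⟩ := hGC z hz
  obtain ⟨ε, hε, hev⟩ :=
    eventually_le_measureReal_Ioc_inter_section (hΩ.preimage hΦcont.fst) ht htΩ
  refine ⟨ε, hε, hev.mono fun z' hz' => ?_⟩
  have hX : Continuous fun s => (Φ s z').1 :=
    (hΦcont.comp (continuous_id.prodMk continuous_const)).fst
  rwa [intervalIntegral_indicator_one_comp hT.le (hΩ.preimage hX).measurableSet]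

/-- Observability inequality for the Liouville (classical Hamiltonian) flow:
under the geometric condition, the time spent by the flow in `Ω` is uniformly
bounded below on the compact set `K`. -/
theorem liouville_observability
    {d : ℕ} (hd : 1 ≤ d) {T : ℝ} (hT : 0 < T)
    (K : Set (EuclideanSpace ℝ (Fin d) × EuclideanSpace ℝ (Fin d)))
    (hK : IsCompact K)
    (Ω : Set (EuclideanSpace ℝ (Fin d))) (hΩ : IsOpen Ω)
    (V : EuclideanSpace ℝ (Fin d) → ℝ) (hV : Differentiable ℝ V)
    (Lg : NNReal) (hLip : LipschitzWith Lg (gradient V))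
    (Φ : ℝ → EuclideanSpace ℝ (Fin d) × EuclideanSpace ℝ (Fin d) →
      EuclideanSpace ℝ (Fin d) × EuclideanSpace ℝ (Fin d))
    (hΦcont : Continuous fun p : ℝ × (EuclideanSpace ℝ (Fin d) × EuclideanSpace ℝ (Fin d)) =>
      Φ p.1 p.2)
    (hΦ0 : ∀ z, Φ 0 z = z)
    (hX : ∀ z t, HasDerivAt (fun s => (Φ s z).1) (Φ t z).2 t)
    (hΞ : ∀ z t, HasDerivAt (fun s => (Φ s z).2) (-(gradient V (Φ t z).1)) t)
    (hGC : ∀ z ∈ K, ∃ t ∈ Ioo 0 T, (Φ t z).1 ∈ Ω) :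
    ∃ C > 0, ∀ z ∈ K,
      C ≤ ∫ t in (0:ℝ)..T, Ω.indicator (fun _ => (1:ℝ)) (Φ t z).1 :=
  liouville_observability_general hT K hK Ω hΩ Φ hΦcont hGC
end

section
/- Let 𝓛 ⊆ ℝ^d be a full-rank lattice with fundamental domain Γ, and let 𝓛* be its reciprocal lattice with measurable fundamental domain Γ*. Then for every Schwartz function u : ℝ^d → ℂ, ∫_{ℝ^d} |u(x)|² dx = (1/vol(Γ*)) ∫_{Γ*} ∫_Γ |Σ_{ℓ ∈ 𝓛} u(x + ℓ) e^{−i k·(x + ℓ)}|² dx dk. -/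
open MeasureTheory

noncomputable section

/-- A set `L ⊆ ℝ^d` is a full-rank lattice if it is the ℤ-span of an ℝ-basis. -/
def IsFullRankLattice {d : ℕ} (L : Set (EuclideanSpace ℝ (Fin d))) : Prop :=
  ∃ a : Module.Basis (Fin d) ℝ (EuclideanSpace ℝ (Fin d)),
    L = {z | ∃ n : Fin d → ℤ, z = ∑ i, (n i : ℝ) • a i}

/-- `Γ` is a measurable fundamental domain for the lattice `L`: almost every point of
`ℝ^d` has a unique translate by `L` lying in `Γ`. -/
def IsFundDomain {d : ℕ} (L Γ : Set (EuclideanSpace ℝ (Fin d))) : Prop :=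
  MeasurableSet Γ ∧
    ∀ᵐ x : EuclideanSpace ℝ (Fin d) ∂volume, ∃! ℓ, ℓ ∈ L ∧ x - ℓ ∈ Γ

/-- The reciprocal (dual) lattice `L* = {K : K·ℓ ∈ 2πℤ for all ℓ ∈ L}`. -/
def dualLattice {d : ℕ} (L : Set (EuclideanSpace ℝ (Fin d))) :
    Set (EuclideanSpace ℝ (Fin d)) :=
  {K | ∀ ℓ ∈ L, ∃ n : ℤ, (inner ℝ K ℓ : ℝ) = 2 * Real.pi * n}

/-! For fixed `x`, the Bloch transform is a Fourier series in `k` with coefficients `u (x + ℓ)`.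
The characters `k ↦ exp (-i ⟪k, ℓ⟫)`, `ℓ ∈ 𝓛 \ {0}`, integrate to zero over a fundamental domain
of `𝓛*`, so Parseval gives `∫_{Γ*} |𝓑u(k)(x)|² dk = vol(Γ*) Σ_ℓ |u(x + ℓ)|²`. Integrating over
`x ∈ Γ` and unfolding the lattice sum over the fundamental domain `Γ` yields `vol(Γ*) ∫ |u|²`.
Fubini applies because the lattice sums of a Schwartz function converge locally uniformly and,
being periodic, are bounded. -/

open Complex Submodule
open scoped InnerProductSpace ComplexConjugate Pointwise

section Lattice

variable {d : ℕ}

lemma setOf_exists_sum_intCast_smul_eq_span {E ι : Type*} [AddCommGroup E] [Module ℝ E]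
    [Fintype ι] (a : ι → E) :
    {z | ∃ n : ι → ℤ, z = ∑ i, (n i : ℝ) • a i} = (span ℤ (Set.range a) : Set E) := by
  ext z
  simp only [Set.mem_ofPred_eq, SetLike.mem_coe, mem_span_range_iff_exists_fun,
    Int.cast_smul_eq_zsmul, eq_comm]

lemma IsFullRankLattice.exists_basis_eq_span {L : Set (EuclideanSpace ℝ (Fin d))}
    (hL : IsFullRankLattice L) :
    ∃ a : Module.Basis (Fin d) ℝ (EuclideanSpace ℝ (Fin d)), L = span ℤ (Set.range a) := by
  obtain ⟨a, rfl⟩ := hL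
  exact ⟨a, setOf_exists_sum_intCast_smul_eq_span a⟩

def dualLatticeForm (E : Type*) [NormedAddCommGroup E] [InnerProductSpace ℝ E] :
    LinearMap.BilinForm ℝ E :=
  (2 * Real.pi)⁻¹ • innerₗ E

lemma dualLatticeForm_apply {E : Type*} [NormedAddCommGroup E] [InnerProductSpace ℝ E] (x y : E) :
    dualLatticeForm E x y = (2 * Real.pi)⁻¹ * ⟪x, y⟫_ℝ := rfl

lemma dualLatticeForm_nondegenerate (E : Type*) [NormedAddCommGroup E] [InnerProductSpace ℝ E] :
    (dualLatticeForm E).Nondegenerate := by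
  have h : ∀ x : E, dualLatticeForm E x x = 0 → x = 0 := fun x hx => by
    simpa [dualLatticeForm_apply, Real.pi_ne_zero] using hx
  exact ⟨fun x hx => h x (hx x), fun y hy => h y (hy y)⟩

lemma dualLattice_eq_dualSubmodule (N : Submodule ℤ (EuclideanSpace ℝ (Fin d))) :
    dualLattice (N : Set (EuclideanSpace ℝ (Fin d))) =
      (dualLatticeForm _).dualSubmodule N := by
  ext K
  refine forall₂_congr fun ℓ _ => exists_congr fun n => ?_
  rw [dualLatticeForm_apply, LinearMap.toSpanSingleton_apply, zsmul_one,
    eq_inv_mul_iff_mul_eq₀ (by positivity), eq_comm]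

lemma IsFundDomain.isAddFundamentalDomain {Λ : Submodule ℤ (EuclideanSpace ℝ (Fin d))}
    {Γ : Set (EuclideanSpace ℝ (Fin d))} (h : IsFundDomain Λ Γ) :
    IsAddFundamentalDomain Λ Γ := by
  obtain ⟨hΓ, hunique⟩ := h
  have vadd_mem_iff (g : Λ) (x : EuclideanSpace ℝ (Fin d)) : -g +ᵥ x ∈ Γ ↔ x - g ∈ Γ := by
    rw [sub_eq_neg_add]; rfl
  refine ⟨hΓ.nullMeasurableSet, ?_, fun g g' hgg' => ?_⟩
  · filter_upwards [hunique] with x ⟨ℓ, ⟨hℓ, hxℓ⟩, _⟩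
    exact ⟨-⟨ℓ, hℓ⟩, (vadd_mem_iff ⟨ℓ, hℓ⟩ x).2 hxℓ⟩
  · refine measure_mono_null ?_ (ae_iff.1 hunique)
    intro x hx hx_unique
    apply hgg'
    simp only [Set.mem_inter_iff, Set.mem_vadd_set_iff_neg_vadd_mem, vadd_mem_iff] at hx
    exact Subtype.ext (hx_unique.unique ⟨g.2, hx.1⟩ ⟨g'.2, hx.2⟩)

end Lattice

section Decay

variable {E F : Type*} [NormedAddCommGroup E] [NormedSpace ℝ E] [FiniteDimensional ℝ E]
  [NormedAddCommGroup F] [NormedSpace ℝ F] (Λ : Submodule ℤ E) [DiscreteTopology Λ]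

lemma ZLattice.summable_one_add_norm_pow_inv {n : ℕ} (hn : Module.finrank ℤ Λ < n) :
    Summable fun ℓ : Λ => ((1 + ‖ℓ‖) ^ n)⁻¹ := by
  refine (ZLattice.summable_norm_pow_inv Λ n hn).of_norm_bounded_eventually ?_
  filter_upwards [(Set.finite_singleton (0 : Λ)).compl_mem_cofinite] with ℓ hℓ
  have hℓ : 0 < ‖ℓ‖ := norm_pos_iff.2 hℓ
  rw [Real.norm_of_nonneg (by positivity), inv_pow]
  gcongr
  linarith

lemma SchwartzMap.exists_summable_bound_comp_add (u : SchwartzMap E F) (R : ℝ) :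
    ∃ W : Λ → ℝ, Summable W ∧ ∀ (ℓ : Λ) (x : E), ‖x‖ ≤ R → ‖u (x + ℓ)‖ ≤ W ℓ := by
  set N := Module.finrank ℤ Λ + 1
  obtain ⟨C, hC⟩ : ∃ C, ∀ y, (1 + ‖y‖) ^ N * ‖u y‖ ≤ C := ⟨_, fun y => by
    simpa using SchwartzMap.one_add_le_sup_seminorm_apply (𝕜 := ℝ) (m := (N, 0)) le_rfl le_rfl u y⟩
  refine ⟨fun ℓ => C * (1 + R) ^ N * ((1 + ‖ℓ‖) ^ N)⁻¹,
    (ZLattice.summable_one_add_norm_pow_inv Λ (Nat.lt_add_one _)).mul_left _, fun ℓ x hx => ?_⟩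
  have hR : 0 ≤ R := (norm_nonneg x).trans hx
  -- Peetre's inequality
  have peetre : 1 + ‖ℓ‖ ≤ (1 + R) * (1 + ‖x + ℓ‖) := by
    have : ‖ℓ‖ ≤ ‖x + ℓ‖ + ‖x‖ := by simpa using norm_sub_le (x + ℓ) x
    nlinarith [norm_nonneg (x + ℓ)]
  show _ ≤ C * (1 + R) ^ N * ((1 + ‖ℓ‖) ^ N)⁻¹
  rw [← div_eq_mul_inv, le_div_iff₀ (by positivity)]
  calc ‖u (x + ℓ)‖ * (1 + ‖ℓ‖) ^ N ≤ ‖u (x + ℓ)‖ * ((1 + R) ^ N * (1 + ‖x + ℓ‖) ^ N) := by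
        rw [← mul_pow]; gcongr
    _ = (1 + R) ^ N * ((1 + ‖x + ℓ‖) ^ N * ‖u (x + ℓ)‖) := by ring
    _ ≤ (1 + R) ^ N * C := by gcongr; exact hC _
    _ = C * (1 + R) ^ N := mul_comm _ _

lemma SchwartzMap.summable_norm_comp_add (u : SchwartzMap E F) (x : E) :
    Summable fun ℓ : Λ => ‖u (x + ℓ)‖ :=
  let ⟨_, hW, huW⟩ := u.exists_summable_bound_comp_add Λ ‖x‖
  hW.of_nonneg_of_le (fun _ => norm_nonneg _) fun ℓ => huW ℓ x le_rfl

lemma SchwartzMap.continuous_tsum_of_norm_le_comp_add {X G : Type*} [TopologicalSpace X]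
    [NormedAddCommGroup G] [CompleteSpace G] (u : SchwartzMap E F) {π : X → E}
    (hπ : Continuous π) {f : Λ → X → G} (hf : ∀ ℓ, Continuous (f ℓ))
    (hfu : ∀ ℓ p, ‖f ℓ p‖ ≤ ‖u (π p + ℓ)‖) :
    Continuous fun p => ∑' ℓ, f ℓ p := by
  refine continuous_iff_continuousAt.2 fun p₀ => ?_
  obtain ⟨W, hW, huW⟩ := u.exists_summable_bound_comp_add Λ (‖π p₀‖ + 1)
  refine (continuousOn_tsum (fun ℓ => (hf ℓ).continuousOn) hW fun ℓ p hp =>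
    (hfu ℓ p).trans (huW ℓ _ ?_)).continuousAt
    (hπ.continuousAt.preimage_mem_nhds (Metric.ball_mem_nhds _ one_pos))
  have : ‖π p - π p₀‖ < 1 := by simpa [dist_eq_norm] using hp
  linarith [norm_le_norm_add_norm_sub' (π p) (π p₀)]

lemma SchwartzMap.exists_tsum_norm_comp_add_le [IsZLattice ℝ Λ] (u : SchwartzMap E F) :
    ∃ M, ∀ x, ∑' ℓ : Λ, ‖u (x + ℓ)‖ ≤ M := by
  have hcont : Continuous fun x => ∑' ℓ : Λ, ‖u (x + ℓ)‖ :=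
    u.continuous_tsum_of_norm_le_comp_add Λ continuous_id
      (fun ℓ => (u.continuous.comp (continuous_add_const _)).norm) fun _ _ => (norm_norm _).le
  have hper (x w : E) (hw : w ∈ Λ) : ∑' ℓ : Λ, ‖u (x + w + ℓ)‖ = ∑' ℓ : Λ, ‖u (x + ℓ)‖ := by
    simpa [add_assoc] using (Equiv.addLeft (⟨w, hw⟩ : Λ)).tsum_eq fun ℓ : Λ => ‖u (x + ℓ)‖
  obtain ⟨M, hM⟩ := (IsZLattice.isCompact_range_of_periodic Λ _ hcont hper).bddAbove
  exact ⟨M, fun x => hM ⟨x, rfl⟩⟩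

end Decay

section FundamentalDomain

theorem MeasureTheory.IsAddFundamentalDomain.setIntegral_tsum_vadd {G α E : Type*} [AddGroup G]
    [Countable G] [AddAction G α] [MeasurableSpace α] [NormedAddCommGroup E] [NormedSpace ℝ E]
    {s : Set α} {μ : Measure α} [MeasurableConstVAdd G α] [VAddInvariantMeasure G α μ]
    (h : IsAddFundamentalDomain G s μ) {f : α → E} (hf : Integrable f μ) :
    ∫ x in s, ∑' g : G, f (g +ᵥ x) ∂μ = ∫ x, f x ∂μ := by
  rw [h.integral_eq_tsum'' f hf, integral_tsum]
  · exact fun g => (hf.1.comp_quasiMeasurePreserving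
      (measurePreserving_vadd g μ).quasiMeasurePreserving).restrict
  · rw [← h.lintegral_eq_tsum'' (‖f ·‖ₑ)]
    exact hf.2.ne

-- Instance search finds this for `Λ.toAddSubgroup` but not for `Λ` itself.
instance Submodule.vaddInvariantMeasure {E : Type*} [AddCommGroup E] [MeasurableSpace E]
    (Λ : Submodule ℤ E) (μ : Measure E) [μ.IsAddLeftInvariant] : VAddInvariantMeasure Λ E μ :=
  inferInstanceAs (VAddInvariantMeasure Λ.toAddSubgroup E μ)

lemma setIntegral_exp_neg_I_inner_eq_zero {E : Type*} [NormedAddCommGroup E]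
    [InnerProductSpace ℝ E] [MeasurableSpace E] [BorelSpace E] {Λ : Submodule ℤ E} [Countable Λ]
    {Γ : Set E} {μ : Measure E} [μ.IsAddLeftInvariant] (hΓ : IsAddFundamentalDomain Λ Γ μ) {w : E}
    (hw : ∀ g ∈ Λ, ∃ n : ℤ, ⟪g, w⟫_ℝ = 2 * Real.pi * n) (hw0 : w ≠ 0) :
    ∫ k in Γ, exp (-I * ⟪k, w⟫_ℝ) ∂μ = 0 := by
  set f : E → ℂ := fun k => exp (-I * ⟪k, w⟫_ℝ)
  have f_add (v k : E) : f (v + k) = exp (-I * ⟪v, w⟫_ℝ) * f k := by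
    simp only [f, inner_add_left, ofReal_add, mul_add, exp_add]
  have hper (g : Λ) (k : E) : f (g +ᵥ k) = f k := by
    obtain ⟨n, hn⟩ := hw g g.2
    rw [Submodule.vadd_def, vadd_eq_add, f_add, hn,
      show -I * ((2 * Real.pi * n : ℝ) : ℂ) = (-n : ℤ) * (2 * Real.pi * I) by push_cast; ring,
      exp_int_mul_two_pi_mul_I, one_mul]
  set t : E := (Real.pi / ⟪w, w⟫_ℝ) • w
  have ht : ⟪t, w⟫_ℝ = Real.pi := by
    rw [real_inner_smul_left, div_mul_cancel₀ _ (inner_self_ne_zero.2 hw0)]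
  have hshift (k : E) : f (t + k) = -f k := by
    rw [f_add, ht, show -I * (Real.pi : ℂ) = -(Real.pi * I) by ring, exp_neg, exp_pi_mul_I]
    ring
  -- Translating by `t` flips the sign of the integrand but, by periodicity, not the integral.
  refine self_eq_neg.1 ?_
  calc ∫ k in Γ, f k ∂μ = ∫ k in t +ᵥ Γ, f k ∂μ := hΓ.setIntegral_eq (hΓ.vadd_of_comm t) hper
    _ = ∫ k in Γ, f (t + k) ∂μ := by
        rw [← Set.image_vadd]
        exact (measurePreserving_vadd t μ).setIntegral_image_emb
          (measurableEmbedding_const_vadd t) f Γ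
    _ = -∫ k in Γ, f k ∂μ := by simp_rw [hshift, integral_neg]

end FundamentalDomain

section Parseval

variable {α ι : Type*} [TopologicalSpace α] [MeasurableSpace α] [OpensMeasurableSpace α]
  {ν : Measure α} [IsFiniteMeasure ν] [Countable ι] {e : ι → α → ℂ} {c : ι → ℂ}

lemma integral_tsum_mul_eq_tsum_mul_integral (he : ∀ i, Continuous (e i))
    (he1 : ∀ i k, ‖e i k‖ = 1) (hc : Summable fun i => ‖c i‖) {g : α → ℂ}
    (hg : AEStronglyMeasurable g ν) {M : ℝ} (hgM : ∀ k, ‖g k‖ ≤ M) :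
    ∫ k, (∑' i, c i * e i k) * g k ∂ν = ∑' i, c i * ∫ k, e i k * g k ∂ν := by
  have hterm (i : ι) (k : α) : ‖c i * e i k * g k‖ = ‖c i‖ * ‖g k‖ := by
    rw [norm_mul, norm_mul, he1, mul_one]
  have hint (i : ι) : Integrable (fun k => c i * e i k * g k) ν :=
    .of_bound (((he i).aestronglyMeasurable.const_mul _).mul hg) (‖c i‖ * M) <|
      .of_forall fun k => (hterm i k).trans_le (by gcongr; exact hgM k)
  simp_rw [← tsum_mul_right, mul_assoc, ← integral_const_mul]
  refine (integral_tsum_of_summable_integral_norm (fun i => by simpa only [mul_assoc] using hint i)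
    ?_).symm
  simp_rw [← mul_assoc, hterm, integral_const_mul]
  exact hc.mul_right _

theorem integral_norm_tsum_mul_sq_of_orthogonal (he : ∀ i, Continuous (e i))
    (he1 : ∀ i k, ‖e i k‖ = 1) (horth : ∀ i j, i ≠ j → ∫ k, e i k * conj (e j k) ∂ν = 0)
    (hc : Summable fun i => ‖c i‖) :
    ∫ k, ‖∑' i, c i * e i k‖ ^ 2 ∂ν = ν.real Set.univ * ∑' i, ‖c i‖ ^ 2 := by
  set F := fun k => ∑' i, c i * e i k
  have hnorm (i : ι) (k : α) : ‖c i * e i k‖ = ‖c i‖ := by rw [norm_mul, he1, mul_one]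
  have hF : Continuous F := continuous_tsum (fun i => continuous_const.mul (he i)) hc
    fun i k => (hnorm i k).le
  have hFM (k : α) : ‖F k‖ ≤ ∑' i, ‖c i‖ := by
    simpa only [hnorm] using norm_tsum_le_tsum_norm (hc.congr fun i => (hnorm i k).symm)
  have hdiag (j : ι) : ∫ k, e j k * conj (e j k) ∂ν = ν.real Set.univ := by
    simp [Complex.mul_conj', he1]
  have hcoef (i : ι) : ∫ k, e i k * conj (F k) ∂ν = conj (c i) * ν.real Set.univ := by
    have : ∫ k, F k * conj (e i k) ∂ν = c i * ν.real Set.univ := by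
      rw [integral_tsum_mul_eq_tsum_mul_integral he he1 hc (g := fun k => conj (e i k))
        (continuous_conj.comp (he i)).aestronglyMeasurable (M := 1) fun k => by simp [he1],
        tsum_eq_single i fun j hj => by rw [horth j i hj, mul_zero], hdiag]
    rw [← conj_conj (∫ k, e i k * conj (F k) ∂ν), ← integral_conj]
    simpa [mul_comm] using congrArg conj this
  apply Complex.ofReal_injective
  calc ((∫ k, ‖F k‖ ^ 2 ∂ν : ℝ) : ℂ) = ∫ k, F k * conj (F k) ∂ν := by
        rw [← integral_complex_ofReal]; simp_rw [Complex.mul_conj']; push_cast; rfl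
    _ = ∑' i, c i * (conj (c i) * ν.real Set.univ) := by
        rw [integral_tsum_mul_eq_tsum_mul_integral he he1 hc (g := fun k => conj (F k))
          (continuous_conj.comp hF).aestronglyMeasurable
          fun k => (RCLike.norm_conj _).trans_le (hFM k)]
        simp_rw [hcoef]
    _ = _ := by
        simp_rw [← mul_assoc, Complex.mul_conj', tsum_mul_right]
        push_cast; ring

end Parseval

section Bloch

variable {E : Type*} [NormedAddCommGroup E] [InnerProductSpace ℝ E] [FiniteDimensional ℝ E]
  (Λ : Submodule ℤ E) [DiscreteTopology Λ]

def blochTransform (u : E → ℂ) (k x : E) : ℂ :=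
  ∑' ℓ : Λ, u (x + ℓ) * exp (-I * ⟪k, x + ℓ⟫_ℝ)

lemma norm_exp_neg_I_mul_ofReal (r : ℝ) : ‖exp (-I * r)‖ = 1 := by
  simp [norm_exp]

lemma continuous_blochTransform (u : SchwartzMap E ℂ) :
    Continuous (Function.uncurry (blochTransform Λ u)) :=
  u.continuous_tsum_of_norm_le_comp_add Λ continuous_snd (fun ℓ => by fun_prop)
    fun ℓ p => by rw [norm_mul, norm_exp_neg_I_mul_ofReal, mul_one]

lemma norm_blochTransform_le (u : SchwartzMap E ℂ) (k x : E) :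
    ‖blochTransform Λ u k x‖ ≤ ∑' ℓ : Λ, ‖u (x + ℓ)‖ := by
  have hnorm (ℓ : Λ) : ‖u (x + ℓ) * exp (-I * ⟪k, x + ℓ⟫_ℝ)‖ = ‖u (x + ℓ)‖ := by
    rw [norm_mul, norm_exp_neg_I_mul_ofReal, mul_one]
  rw [blochTransform]
  simpa only [hnorm] using
    norm_tsum_le_tsum_norm ((u.summable_norm_comp_add Λ x).congr fun ℓ => (hnorm ℓ).symm)

variable [MeasurableSpace E] [BorelSpace E]

lemma setIntegral_norm_blochTransform_sq [Countable Λ] {Λ' : Submodule ℤ E} [Countable Λ']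
    {Γ' : Set E} {μ : Measure E} [μ.IsAddLeftInvariant] (hΓ' : IsAddFundamentalDomain Λ' Γ' μ)
    (hΓ'_fin : μ Γ' ≠ ⊤) (hdual : ∀ g ∈ Λ', ∀ ℓ ∈ Λ, ∃ n : ℤ, ⟪g, ℓ⟫_ℝ = 2 * Real.pi * n)
    (u : SchwartzMap E ℂ) (x : E) :
    ∫ k in Γ', ‖blochTransform Λ u k x‖ ^ 2 ∂μ = μ.real Γ' * ∑' ℓ : Λ, ‖u (x + ℓ)‖ ^ 2 := by
  have : IsFiniteMeasure (μ.restrict Γ') := isFiniteMeasure_restrict.2 hΓ'_fin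
  have hmul_conj (ℓ ℓ' : Λ) (k : E) : exp (-I * ⟪k, x + ℓ⟫_ℝ) * conj (exp (-I * ⟪k, x + ℓ'⟫_ℝ)) =
      exp (-I * ⟪k, (ℓ - ℓ' : Λ)⟫_ℝ) := by
    rw [← exp_conj, ← exp_add]
    congr 1
    simp only [map_mul, map_neg, map_add, conj_I, conj_ofReal, Submodule.coe_sub, inner_add_right,
      inner_sub_right, ofReal_add, ofReal_sub]
    ring
  have horth (ℓ ℓ' : Λ) (hne : ℓ ≠ ℓ') :
      ∫ k in Γ', exp (-I * ⟪k, x + ℓ⟫_ℝ) * conj (exp (-I * ⟪k, x + ℓ'⟫_ℝ)) ∂μ = 0 := by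
    simp_rw [hmul_conj]
    exact setIntegral_exp_neg_I_inner_eq_zero hΓ' (fun g hg => hdual g hg _ (ℓ - ℓ').2)
      (by simpa [sub_eq_zero] using hne)
  simp only [blochTransform]
  rw [integral_norm_tsum_mul_sq_of_orthogonal (fun ℓ => by fun_prop)
    (fun ℓ k => norm_exp_neg_I_mul_ofReal _) horth (u.summable_norm_comp_add Λ x),
    measureReal_restrict_apply_univ]

lemma MeasureTheory.IsAddFundamentalDomain.measure_ne_top_of_isZLattice {Λ' : Submodule ℤ E}
    [DiscreteTopology Λ'] [IsZLattice ℝ Λ'] {Γ' : Set E} {μ : Measure E} [μ.IsAddHaarMeasure]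
    (hΓ' : IsAddFundamentalDomain Λ' Γ' μ) : μ Γ' ≠ ⊤ := by
  have := ZLattice.covolume_eq_measure_fundamentalDomain Λ' μ hΓ' ▸ ZLattice.covolume_pos Λ' μ
  exact (ENNReal.toReal_pos_iff.1 this).2.ne

theorem setIntegral_setIntegral_norm_blochTransform_sq [IsZLattice ℝ Λ] {Λ' : Submodule ℤ E}
    [DiscreteTopology Λ'] [IsZLattice ℝ Λ']
    (hdual : ∀ g ∈ Λ', ∀ ℓ ∈ Λ, ∃ n : ℤ, ⟪g, ℓ⟫_ℝ = 2 * Real.pi * n) {Γ Γ' : Set E}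
    {μ : Measure E} [μ.IsAddHaarMeasure] (hΓ : IsAddFundamentalDomain Λ Γ μ)
    (hΓ' : IsAddFundamentalDomain Λ' Γ' μ) (u : SchwartzMap E ℂ) :
    ∫ k in Γ', ∫ x in Γ, ‖blochTransform Λ u k x‖ ^ 2 ∂μ ∂μ =
      ZLattice.covolume Λ' μ * ∫ x, ‖u x‖ ^ 2 ∂μ := by
  have : IsFiniteMeasure (μ.restrict Γ) :=
    isFiniteMeasure_restrict.2 hΓ.measure_ne_top_of_isZLattice
  have : IsFiniteMeasure (μ.restrict Γ') :=
    isFiniteMeasure_restrict.2 hΓ'.measure_ne_top_of_isZLattice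
  obtain ⟨M, hM⟩ := u.exists_tsum_norm_comp_add_le Λ
  have hint : Integrable (fun p : E × E => ‖blochTransform Λ u p.1 p.2‖ ^ 2)
      ((μ.restrict Γ').prod (μ.restrict Γ)) :=
    .of_bound ((continuous_blochTransform Λ u).norm.pow 2).aestronglyMeasurable (M ^ 2) <|
      .of_forall fun p => by
        rw [Real.norm_of_nonneg (by positivity)]
        exact pow_le_pow_left₀ (norm_nonneg _) ((norm_blochTransform_le Λ u _ _).trans (hM _)) 2
  have hunfold : ∫ x in Γ, ∑' ℓ : Λ, ‖u (x + ℓ)‖ ^ 2 ∂μ = ∫ x, ‖u x‖ ^ 2 ∂μ := by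
    simpa only [Submodule.vadd_def, vadd_eq_add, add_comm] using
      hΓ.setIntegral_tsum_vadd ((u.memLp 2 μ).integrable_norm_pow two_ne_zero)
  rw [integral_integral_swap hint, ZLattice.covolume_eq_measure_fundamentalDomain Λ' μ hΓ',
    ← hunfold, ← integral_const_mul]
  exact integral_congr_ae <| .of_forall fun x =>
    setIntegral_norm_blochTransform_sq Λ hΓ' hΓ'.measure_ne_top_of_isZLattice hdual u x

end Bloch

/-- Plancherel (isometry) property of the Bloch transform
`(𝓑u)(k)(x) = Σ_{ℓ ∈ L} u(x + ℓ) e^{−i k·(x+ℓ)}` for Schwartz functions. -/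
theorem bloch_transform_plancherel
    {d : ℕ}
    (L : Set (EuclideanSpace ℝ (Fin d))) (hL : IsFullRankLattice L)
    (Γ : Set (EuclideanSpace ℝ (Fin d))) (hΓ : IsFundDomain L Γ)
    (Γstar : Set (EuclideanSpace ℝ (Fin d))) (hΓstar : IsFundDomain (dualLattice L) Γstar)
    (u : SchwartzMap (EuclideanSpace ℝ (Fin d)) ℂ) :
    ∫ x : EuclideanSpace ℝ (Fin d), ‖u x‖ ^ 2
      = (1 / (volume Γstar).toReal) *
        ∫ k in Γstar, ∫ x in Γ,
          ‖∑' ℓ : L, u (x + (ℓ : EuclideanSpace ℝ (Fin d))) *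
            Complex.exp (-(Complex.I) *
              ((inner ℝ k (x + (ℓ : EuclideanSpace ℝ (Fin d))) : ℝ) : ℂ))‖ ^ 2 := by
  obtain ⟨a, rfl⟩ := hL.exists_basis_eq_span
  have hdual := dualLattice_eq_dualSubmodule (span ℤ (Set.range a))
  rw [LinearMap.BilinForm.dualSubmodule_span_of_basis _ (dualLatticeForm_nondegenerate _)] at hdual
  rw [hdual] at hΓstar
  have hFD := hΓ.isAddFundamentalDomain
  have hFDstar := hΓstar.isAddFundamentalDomain
  have hcovol := ZLattice.covolume_eq_measure_fundamentalDomain _ _ hFDstar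
  have hbloch := setIntegral_setIntegral_norm_blochTransform_sq _
    (fun g hg => (hdual ▸ hg : g ∈ dualLattice _)) hFD hFDstar u
  have hpos : 0 < volume.real Γstar := hcovol ▸ ZLattice.covolume_pos _ _
  rw [hcovol] at hbloch
  calc ∫ x, ‖u x‖ ^ 2 = 1 / volume.real Γstar * (volume.real Γstar * ∫ x, ‖u x‖ ^ 2) := by
        field_simp
    _ = _ := by rw [← hbloch]; rfl
end
end

section
/- Let 𝓛 ⊆ ℝ^d be a full-rank lattice with fundamental domain Γ, let ħ > 0, write dist(z, 𝓛) = inf_{ℓ ∈ 𝓛} |z − ℓ|, and let ψ : ℝ^d → ℂ be measurable, 𝓛-periodic with ∫_Γ |ψ|² < ∞. Then ∫_Γ ∫_Γ [(πħ)^{−d/2} ∫_{ℝ^d} dist(y + z − q, 𝓛)² e^{−|z|²/ħ} dz] |ψ(q)|² |ψ(y)|² dq dy ≤ (dħ/2) (∫_Γ |ψ|²)² + ∫_Γ ∫_Γ dist(y − q, 𝓛)² |ψ(q)|² |ψ(y)|² dq dy. -/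
open MeasureTheory

noncomputable section

/-!
The density `(πħ)^{-d/2} e^{-|z|²/ħ}` has second moment `dħ/2`. For each `ℓ ∈ 𝓛` we have
`dist(x + z, 𝓛) ≤ |x - ℓ + z|`, and averaging `|x - ℓ + z|²` against the Gaussian gives exactly
`|x - ℓ|² + dħ/2`, the cross term having mean zero. The infimum over `ℓ` bounds the smoothed
squared distance by `dist(x, 𝓛)² + dħ/2` pointwise; integrate this at `x = y - q` against
`|ψ(q)|² |ψ(y)|²`.
-/

open Real Function Module

section Gaussian

variable {b : ℝ}

lemma integrable_sq_mul_exp_neg_mul_sq (hb : 0 < b) :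
    Integrable fun x : ℝ => x ^ 2 * exp (-b * x ^ 2) := by
  simpa using integrable_rpow_mul_exp_neg_mul_sq hb (s := 2) (by norm_num)

lemma integral_sq_mul_exp_neg_mul_sq (hb : 0 < b) :
    ∫ x : ℝ, x ^ 2 * exp (-b * x ^ 2) = (2 * b)⁻¹ * ∫ x : ℝ, exp (-b * x ^ 2) := by
  have hv (x : ℝ) : HasDerivAt (fun x => -(2 * b)⁻¹ * exp (-b * x ^ 2))
      (x * exp (-b * x ^ 2)) x := by
    refine (((hasDerivAt_pow 2 x).const_mul (-b)).exp.const_mul _).congr_deriv ?_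
    field_simp
    norm_num
  have := integral_mul_deriv_eq_deriv_mul_of_integrable (u := fun x => x) (u' := fun _ => 1)
    (fun x _ => hasDerivAt_id x) (fun x _ => hv x)
    (by simpa only [Pi.mul_def, ← mul_assoc, ← sq] using integrable_sq_mul_exp_neg_mul_sq hb)
    (by simpa only [Pi.mul_def, one_mul] using (integrable_exp_neg_mul_sq hb).const_mul _)
    (by simpa only [Pi.mul_def, mul_left_comm] using
      (integrable_mul_exp_neg_mul_sq hb).const_mul (-(2 * b)⁻¹))
  simp only [← mul_assoc, ← sq, one_mul] at this
  rw [this, integral_const_mul, neg_mul, neg_neg]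

section Coordinates

variable {ι : Type*} [Fintype ι]

lemma exp_neg_mul_sum_sq (x : ι → ℝ) :
    exp (-b * ∑ i, x i ^ 2) = ∏ i, exp (-b * x i ^ 2) := by
  rw [Finset.mul_sum, exp_sum]

lemma integrable_exp_neg_mul_sum_sq (hb : 0 < b) :
    Integrable fun x : ι → ℝ => exp (-b * ∑ i, x i ^ 2) := by
  simp_rw [exp_neg_mul_sum_sq]
  exact Integrable.fintype_prod (f := fun _ t => exp (-b * t ^ 2))
    fun _ => integrable_exp_neg_mul_sq hb

variable [DecidableEq ι]

lemma sum_sq_mul_exp_neg_mul_sum_sq (x : ι → ℝ) :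
    (∑ i, x i ^ 2) * exp (-b * ∑ i, x i ^ 2) =
      ∑ i, ∏ j, (if j = i then x j ^ 2 else 1) * exp (-b * x j ^ 2) := by
  simp_rw [Finset.prod_mul_distrib, Finset.prod_ite_eq', Finset.mem_univ, if_true,
    ← exp_neg_mul_sum_sq, Finset.sum_mul]

lemma integrable_prod_ite_sq_mul_exp_neg_mul_sq (hb : 0 < b) (i : ι) :
    Integrable fun x : ι → ℝ => ∏ j, (if j = i then x j ^ 2 else 1) * exp (-b * x j ^ 2) := by
  refine Integrable.fintype_prod
    (f := fun j t => (if j = i then t ^ 2 else 1) * exp (-b * t ^ 2)) fun j => ?_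
  split_ifs
  · exact integrable_sq_mul_exp_neg_mul_sq hb
  · simpa using integrable_exp_neg_mul_sq hb

lemma integral_prod_ite_sq_mul_exp_neg_mul_sq (hb : 0 < b) (i : ι) :
    ∫ x : ι → ℝ, ∏ j, (if j = i then x j ^ 2 else 1) * exp (-b * x j ^ 2) =
      (2 * b)⁻¹ * ∫ x : ι → ℝ, ∏ j, exp (-b * x j ^ 2) := by
  have hfactor (j : ι) : ∫ t : ℝ, (if j = i then t ^ 2 else 1) * exp (-b * t ^ 2) =
      (if j = i then (2 * b)⁻¹ else 1) * ∫ t : ℝ, exp (-b * t ^ 2) := by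
    split_ifs
    · exact integral_sq_mul_exp_neg_mul_sq hb
    · simp
  rw [integral_fintype_prod_volume_eq_prod
      (fun j t => (if j = i then t ^ 2 else 1) * exp (-b * t ^ 2)),
    integral_fintype_prod_volume_eq_prod (fun _ t => exp (-b * t ^ 2))]
  simp_rw [hfactor, Finset.prod_mul_distrib, Finset.prod_ite_eq', Finset.mem_univ, if_true]

lemma integrable_sum_sq_mul_exp_neg_mul_sum_sq (hb : 0 < b) :
    Integrable fun x : ι → ℝ => (∑ i, x i ^ 2) * exp (-b * ∑ i, x i ^ 2) := by
  simp_rw [sum_sq_mul_exp_neg_mul_sum_sq]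
  exact integrable_finsetSum _ fun i _ => integrable_prod_ite_sq_mul_exp_neg_mul_sq hb i

lemma integral_sum_sq_mul_exp_neg_mul_sum_sq (hb : 0 < b) :
    ∫ x : ι → ℝ, (∑ i, x i ^ 2) * exp (-b * ∑ i, x i ^ 2) =
      Fintype.card ι * (2 * b)⁻¹ * ∫ x : ι → ℝ, exp (-b * ∑ i, x i ^ 2) := by
  simp_rw [sum_sq_mul_exp_neg_mul_sum_sq, exp_neg_mul_sum_sq]
  rw [integral_finsetSum _ fun i _ => integrable_prod_ite_sq_mul_exp_neg_mul_sq hb i]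
  simp_rw [integral_prod_ite_sq_mul_exp_neg_mul_sq hb, Finset.sum_const, Finset.card_univ,
    nsmul_eq_mul, mul_assoc]

end Coordinates

variable {V : Type*} [NormedAddCommGroup V] [InnerProductSpace ℝ V] [FiniteDimensional ℝ V]
  [MeasurableSpace V] [BorelSpace V]

lemma exists_measurePreserving_norm_sq_eq_sum :
    ∃ e : (Fin (finrank ℝ V) → ℝ) ≃ᵐ V, MeasurePreserving e ∧
      ∀ x, ‖e x‖ ^ 2 = ∑ i, x i ^ 2 := by
  let b := stdOrthonormalBasis ℝ V
  refine ⟨(MeasurableEquiv.toLp 2 _).trans b.measurableEquiv.symm,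
    b.measurePreserving_measurableEquiv.symm.comp (PiLp.volume_preserving_toLp _), fun x => ?_⟩
  simp [OrthonormalBasis.measurableEquiv, EuclideanSpace.real_norm_sq_eq]

lemma integral_comp_norm_sq (f : ℝ → ℝ) :
    ∫ v : V, f (‖v‖ ^ 2) = ∫ x : Fin (finrank ℝ V) → ℝ, f (∑ i, x i ^ 2) := by
  obtain ⟨e, he, hnorm⟩ := exists_measurePreserving_norm_sq_eq_sum (V := V)
  simp_rw [← he.integral_comp' (fun v => f (‖v‖ ^ 2)), hnorm]

lemma integrable_comp_norm_sq_iff {f : ℝ → ℝ} :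
    Integrable (fun v : V => f (‖v‖ ^ 2)) ↔
      Integrable fun x : Fin (finrank ℝ V) → ℝ => f (∑ i, x i ^ 2) := by
  obtain ⟨e, he, hnorm⟩ := exists_measurePreserving_norm_sq_eq_sum (V := V)
  rw [← he.integrable_comp_emb e.measurableEmbedding]
  simp [Function.comp_def, hnorm]

lemma integrable_exp_neg_mul_sq_norm (hb : 0 < b) :
    Integrable fun v : V => exp (-b * ‖v‖ ^ 2) :=
  integrable_comp_norm_sq_iff (f := fun t => exp (-b * t)).2 (integrable_exp_neg_mul_sum_sq hb)

lemma integrable_norm_sq_mul_exp_neg_mul_sq_norm (hb : 0 < b) :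
    Integrable fun v : V => ‖v‖ ^ 2 * exp (-b * ‖v‖ ^ 2) :=
  integrable_comp_norm_sq_iff (f := fun t => t * exp (-b * t)).2
    (integrable_sum_sq_mul_exp_neg_mul_sum_sq hb)

lemma integral_norm_sq_mul_exp_neg_mul_sq_norm (hb : 0 < b) :
    ∫ v : V, ‖v‖ ^ 2 * exp (-b * ‖v‖ ^ 2) =
      finrank ℝ V * (2 * b)⁻¹ * ∫ v : V, exp (-b * ‖v‖ ^ 2) := by
  rw [integral_comp_norm_sq (fun t => t * exp (-b * t)),
    integral_comp_norm_sq (fun t => exp (-b * t)), integral_sum_sq_mul_exp_neg_mul_sum_sq hb,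
    Fintype.card_fin]

lemma integrable_norm_add_sq_mul_exp_neg_mul_sq_norm (hb : 0 < b) (a : V) :
    Integrable fun z : V => ‖a + z‖ ^ 2 * exp (-b * ‖z‖ ^ 2) := by
  refine (((integrable_exp_neg_mul_sq_norm hb).const_mul (2 * ‖a‖ ^ 2)).add
    ((integrable_norm_sq_mul_exp_neg_mul_sq_norm hb).const_mul 2)).mono'
    (by fun_prop) (.of_forall fun z => ?_)
  have := parallelogram_law_with_norm ℝ a z
  rw [norm_of_nonneg (by positivity), Pi.add_apply]
  nlinarith [exp_pos (-b * ‖z‖ ^ 2), sq_nonneg ‖a - z‖]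

/-- The Gaussian is even, so averaging over `±z` and the parallelogram law remove the cross
term. -/
lemma integral_norm_add_sq_mul_exp_neg_mul_sq_norm (hb : 0 < b) (a : V) :
    ∫ z : V, ‖a + z‖ ^ 2 * exp (-b * ‖z‖ ^ 2) =
      (‖a‖ ^ 2 + finrank ℝ V * (2 * b)⁻¹) * ∫ z : V, exp (-b * ‖z‖ ^ 2) := by
  have hplus := integrable_norm_add_sq_mul_exp_neg_mul_sq_norm hb a
  have hminus : Integrable fun z : V => ‖a - z‖ ^ 2 * exp (-b * ‖z‖ ^ 2) := by
    simpa [sub_eq_add_neg] using hplus.comp_neg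
  have hsymm : ∫ z : V, ‖a - z‖ ^ 2 * exp (-b * ‖z‖ ^ 2) =
      ∫ z : V, ‖a + z‖ ^ 2 * exp (-b * ‖z‖ ^ 2) := by
    rw [← integral_neg_eq_self]
    simp_rw [norm_neg, sub_neg_eq_add]
  calc ∫ z : V, ‖a + z‖ ^ 2 * exp (-b * ‖z‖ ^ 2)
      = (∫ z : V, (‖a + z‖ ^ 2 + ‖a - z‖ ^ 2) * exp (-b * ‖z‖ ^ 2)) / 2 := by
        simp_rw [add_mul]
        rw [integral_add hplus hminus, hsymm]
        ring
    _ = ∫ z : V, ‖a‖ ^ 2 * exp (-b * ‖z‖ ^ 2) + ‖z‖ ^ 2 * exp (-b * ‖z‖ ^ 2) := by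
        simp_rw [parallelogram_law_with_norm ℝ a, ← add_mul, mul_assoc]
        rw [integral_const_mul]
        ring
    _ = _ := by
        rw [integral_add ((integrable_exp_neg_mul_sq_norm hb).const_mul _)
          (integrable_norm_sq_mul_exp_neg_mul_sq_norm hb), integral_const_mul,
          integral_norm_sq_mul_exp_neg_mul_sq_norm hb]
        ring

end Gaussian

lemma le_infDist_sq {α : Type*} [PseudoMetricSpace α] {s : Set α} {x : α} {c : ℝ}
    (hs : s.Nonempty) (h : ∀ y ∈ s, c ≤ dist x y ^ 2) : c ≤ Metric.infDist x s ^ 2 :=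
  (sqrt_le_left Metric.infDist_nonneg).1 <|
    (Metric.le_infDist hs).2 fun y hy => (sqrt_le_left dist_nonneg).2 (h y hy)

section GaussianSmoothing

variable {V : Type*} [NormedAddCommGroup V] [InnerProductSpace ℝ V] [FiniteDimensional ℝ V]
  [MeasurableSpace V] [BorelSpace V]

/-- `(πħ)^{-n/2} e^{-|z|²/ħ}` is the density of the centred Gaussian with covariance `(ħ/2) I`. -/
def gaussianSmoothing (ħ : ℝ) (f : V → ℝ) (x : V) : ℝ :=
  (π * ħ) ^ (-(finrank ℝ V : ℝ) / 2) * ∫ z, f (x + z) * exp (-‖z‖ ^ 2 / ħ)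

variable {ħ : ℝ}

lemma exp_neg_sq_div (t : ℝ) : exp (-t ^ 2 / ħ) = exp (-ħ⁻¹ * t ^ 2) := by
  ring_nf

lemma rpow_mul_integral_exp_neg_inv_mul_sq_norm (hħ : 0 < ħ) :
    (π * ħ) ^ (-(finrank ℝ V : ℝ) / 2) * ∫ z : V, exp (-ħ⁻¹ * ‖z‖ ^ 2) = 1 := by
  rw [GaussianFourier.integral_rexp_neg_mul_sq_norm (inv_pos.2 hħ), div_inv_eq_mul, neg_div,
    rpow_neg (by positivity), inv_mul_cancel₀ (by positivity)]

lemma integrable_norm_add_sub_sq_mul_exp_neg_sq_norm_div (hħ : 0 < ħ) (x ℓ : V) :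
    Integrable fun z : V => ‖x + z - ℓ‖ ^ 2 * exp (-‖z‖ ^ 2 / ħ) := by
  simpa only [add_sub_right_comm x, exp_neg_sq_div] using
    integrable_norm_add_sq_mul_exp_neg_mul_sq_norm (inv_pos.2 hħ) (x - ℓ)

lemma gaussianSmoothing_nonneg {f : V → ℝ} (hf : 0 ≤ f) (hħ : 0 < ħ) (x : V) :
    0 ≤ gaussianSmoothing ħ f x :=
  mul_nonneg (by positivity) (integral_nonneg fun z => mul_nonneg (hf _) (exp_pos _).le)

lemma gaussianSmoothing_mono {f g : V → ℝ} (hf : 0 ≤ f) (hfg : f ≤ g) (hħ : 0 < ħ) (x : V)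
    (hg : Integrable fun z => g (x + z) * exp (-‖z‖ ^ 2 / ħ)) :
    gaussianSmoothing ħ f x ≤ gaussianSmoothing ħ g x :=
  mul_le_mul_of_nonneg_left (integral_mono_of_nonneg
    (.of_forall fun z => mul_nonneg (hf _) (exp_pos _).le) hg
    (.of_forall fun z => mul_le_mul_of_nonneg_right (hfg _) (exp_pos _).le)) (by positivity)

lemma gaussianSmoothing_norm_sub_sq (hħ : 0 < ħ) (x ℓ : V) :
    gaussianSmoothing ħ (fun y => ‖y - ℓ‖ ^ 2) x = ‖x - ℓ‖ ^ 2 + finrank ℝ V * ħ / 2 := by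
  simp only [gaussianSmoothing, add_sub_right_comm x, exp_neg_sq_div]
  rw [integral_norm_add_sq_mul_exp_neg_mul_sq_norm (inv_pos.2 hħ), mul_left_comm,
    rpow_mul_integral_exp_neg_inv_mul_sq_norm hħ]
  field_simp

lemma gaussianSmoothing_infDist_sq_le (hħ : 0 < ħ) (L : Set V) (x : V) :
    gaussianSmoothing ħ (fun y => Metric.infDist y L ^ 2) x ≤
      finrank ℝ V * ħ / 2 + Metric.infDist x L ^ 2 := by
  rcases L.eq_empty_or_nonempty with rfl | hL
  · calc gaussianSmoothing ħ (fun y => Metric.infDist y ∅ ^ 2) x = 0 := by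
          simp [gaussianSmoothing]
      _ ≤ _ := by positivity
  have hℓ : ∀ ℓ ∈ L, gaussianSmoothing ħ (fun y => Metric.infDist y L ^ 2) x -
      finrank ℝ V * ħ / 2 ≤ dist x ℓ ^ 2 := by
    intro ℓ hℓ
    have := gaussianSmoothing_mono (g := fun y => ‖y - ℓ‖ ^ 2) (fun _ => sq_nonneg _)
      (fun y => pow_le_pow_left₀ Metric.infDist_nonneg
        ((Metric.infDist_le_dist_of_mem hℓ).trans_eq (dist_eq_norm y ℓ)) 2) hħ x
      (integrable_norm_add_sub_sq_mul_exp_neg_sq_norm_div hħ x ℓ)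
    rw [gaussianSmoothing_norm_sub_sq hħ, ← dist_eq_norm] at this
    linarith
  linarith [le_infDist_sq hL hℓ]

end GaussianSmoothing

section IteratedIntegrals

variable {α β : Type*} [MeasurableSpace α] [MeasurableSpace β] {μ : Measure α} {ν : Measure β}

lemma integral_integral_mono_of_nonneg [SFinite μ] [SFinite ν] {f g : α → β → ℝ}
    (hf : ∀ x y, 0 ≤ f x y) (hfg : ∀ x y, f x y ≤ g x y)
    (hg : Integrable (uncurry g) (μ.prod ν)) :
    ∫ x, ∫ y, f x y ∂ν ∂μ ≤ ∫ x, ∫ y, g x y ∂ν ∂μ := by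
  refine integral_mono_of_nonneg (.of_forall fun x => integral_nonneg (hf x))
    hg.integral_prod_left ?_
  filter_upwards [hg.prod_right_ae] with x hx
  exact integral_mono_of_nonneg (.of_forall (hf x)) hx (.of_forall (hfg x))

variable {w : α → ℝ}

lemma integrable_mul_mul_prod (hw : Integrable w μ) :
    Integrable (fun p : α × α => w p.2 * w p.1) (μ.prod μ) := by
  simpa only [mul_comm] using hw.mul_prod hw

lemma integrable_mul_mul_prod_of_bounded (hw : Integrable w μ) {B : α → α → ℝ} {C : ℝ}
    (hB : AEStronglyMeasurable (uncurry B) (μ.prod μ)) (hBC : ∀ y q, |B y q| ≤ C) :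
    Integrable (fun p : α × α => B p.1 p.2 * (w p.2 * w p.1)) (μ.prod μ) :=
  (integrable_mul_mul_prod hw).bdd_mul hB (.of_forall fun p => hBC p.1 p.2)

variable [SFinite μ]

lemma integral_integral_add_mul_mul (hw : Integrable w μ) (K : ℝ) {B : α → α → ℝ}
    (hB : Integrable (fun p : α × α => B p.1 p.2 * (w p.2 * w p.1)) (μ.prod μ)) :
    ∫ y, ∫ q, (K + B y q) * (w q * w y) ∂μ ∂μ =
      K * (∫ y, w y ∂μ) ^ 2 + ∫ y, ∫ q, B y q * (w q * w y) ∂μ ∂μ := by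
  have hK := (integrable_mul_mul_prod hw).const_mul K
  simp_rw [add_mul]
  rw [integral_integral (hK.add hB), integral_integral hB, integral_add hK hB, integral_const_mul]
  simp_rw [mul_comm (w (Prod.snd _))]
  rw [integral_prod_mul, sq]

lemma integral_integral_mul_mul_le_of_le_add (hw : Integrable w μ) (hw0 : 0 ≤ w)
    {F B : α → α → ℝ} {K : ℝ} (hF0 : ∀ y q, 0 ≤ F y q) (hFB : ∀ y q, F y q ≤ K + B y q)
    (hB : Integrable (fun p : α × α => B p.1 p.2 * (w p.2 * w p.1)) (μ.prod μ)) :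
    ∫ y, ∫ q, F y q * (w q * w y) ∂μ ∂μ ≤
      K * (∫ y, w y ∂μ) ^ 2 + ∫ y, ∫ q, B y q * (w q * w y) ∂μ ∂μ := by
  rw [← integral_integral_add_mul_mul hw K hB]
  have hww (y q : α) : 0 ≤ w q * w y := mul_nonneg (hw0 q) (hw0 y)
  refine integral_integral_mono_of_nonneg (fun y q => mul_nonneg (hF0 y q) (hww y q))
    (fun y q => mul_le_mul_of_nonneg_right (hFB y q) (hww y q)) ?_
  exact (((integrable_mul_mul_prod hw).const_mul K).add hB).congr
    (.of_forall fun p => (add_mul _ _ _).symm)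

end IteratedIntegrals

lemma IsFullRankLattice.exists_infDist_le {d : ℕ} {L : Set (EuclideanSpace ℝ (Fin d))}
    (hL : IsFullRankLattice L) : ∃ C, ∀ x, Metric.infDist x L ≤ C := by
  obtain ⟨a, rfl⟩ := hL
  refine ⟨∑ i, ‖a i‖, fun x => ?_⟩
  have hfloor : (ZSpan.floor a x : EuclideanSpace ℝ (Fin d)) ∈
      {z | ∃ n : Fin d → ℤ, z = ∑ i, (n i : ℝ) • a i} :=
    ⟨fun i => ⌊a.repr x i⌋, by simp [ZSpan.floor, Int.cast_smul_eq_zsmul]⟩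
  calc Metric.infDist x _ ≤ ‖ZSpan.fract a x‖ := by
        rw [ZSpan.fract_apply, ← dist_eq_norm]
        exact Metric.infDist_le_dist_of_mem hfloor
    _ ≤ ∑ i, ‖a i‖ := ZSpan.norm_fract_le a x

theorem gaussian_smoothed_cost_bound_general
    {d : ℕ} (hbar : ℝ) (hhbar : 0 < hbar)
    (L : Set (EuclideanSpace ℝ (Fin d))) (hL : IsFullRankLattice L)
    (Γ : Set (EuclideanSpace ℝ (Fin d)))
    (ψ : EuclideanSpace ℝ (Fin d) → ℂ)
    (hψL2 : IntegrableOn (fun y => ‖ψ y‖ ^ 2) Γ volume) :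
    ∫ y in Γ, ∫ q in Γ,
        ((Real.pi * hbar) ^ (-(d : ℝ) / 2) *
          ∫ z : EuclideanSpace ℝ (Fin d),
            Metric.infDist (y + z - q) L ^ 2 * Real.exp (-‖z‖ ^ 2 / hbar)) *
          (‖ψ q‖ ^ 2 * ‖ψ y‖ ^ 2)
      ≤ (d : ℝ) * hbar / 2 * (∫ y in Γ, ‖ψ y‖ ^ 2) ^ 2 +
        ∫ y in Γ, ∫ q in Γ,
          Metric.infDist (y - q) L ^ 2 * (‖ψ q‖ ^ 2 * ‖ψ y‖ ^ 2) := by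
  obtain ⟨C, hC⟩ := hL.exists_infDist_le
  have hB (y q : EuclideanSpace ℝ (Fin d)) : |Metric.infDist (y - q) L ^ 2| ≤ C ^ 2 := by
    rw [abs_of_nonneg (by positivity)]
    exact pow_le_pow_left₀ Metric.infDist_nonneg (hC _) 2
  have hsmooth (y q : EuclideanSpace ℝ (Fin d)) :
      (π * hbar) ^ (-(d : ℝ) / 2) * ∫ z : EuclideanSpace ℝ (Fin d),
        Metric.infDist (y + z - q) L ^ 2 * exp (-‖z‖ ^ 2 / hbar) =
      gaussianSmoothing hbar (fun x => Metric.infDist x L ^ 2) (y - q) := by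
    simp [gaussianSmoothing, add_sub_right_comm y]
  have hcont : Continuous fun p : EuclideanSpace ℝ (Fin d) × EuclideanSpace ℝ (Fin d) =>
      Metric.infDist (p.1 - p.2) L ^ 2 :=
    ((Metric.continuous_infDist_pt L).comp (continuous_fst.sub continuous_snd)).pow 2
  simp_rw [hsmooth]
  exact integral_integral_mul_mul_le_of_le_add hψL2 (fun _ => by positivity)
    (fun y q => gaussianSmoothing_nonneg (fun _ => sq_nonneg _) hhbar (y - q))
    (fun y q => by simpa using gaussianSmoothing_infDist_sq_le hhbar L (y - q))
    (integrable_mul_mul_prod_of_bounded hψL2 (B := fun y q => Metric.infDist (y - q) L ^ 2)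
      hcont.aestronglyMeasurable hB)

/-- Bound on the position part of the transportation cost between a periodic pure state
and its Husimi density: the Gaussian-smoothed squared lattice distance, averaged against
the periodic densities `|ψ(q)|² |ψ(y)|²`, exceeds the unsmoothed one by at most `dħ/2`
times the squared mass. -/
theorem gaussian_smoothed_cost_bound
    {d : ℕ} (hbar : ℝ) (hhbar : 0 < hbar)
    (L : Set (EuclideanSpace ℝ (Fin d))) (hL : IsFullRankLattice L)
    (Γ : Set (EuclideanSpace ℝ (Fin d))) (hΓ : IsFundDomain L Γ)
    (ψ : EuclideanSpace ℝ (Fin d) → ℂ) (hψmeas : Measurable ψ)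
    (hψper : ∀ y : EuclideanSpace ℝ (Fin d), ∀ ℓ ∈ L, ψ (y + ℓ) = ψ y)
    (hψL2 : IntegrableOn (fun y => ‖ψ y‖ ^ 2) Γ volume) :
    ∫ y in Γ, ∫ q in Γ,
        ((Real.pi * hbar) ^ (-(d : ℝ) / 2) *
          ∫ z : EuclideanSpace ℝ (Fin d),
            Metric.infDist (y + z - q) L ^ 2 * Real.exp (-‖z‖ ^ 2 / hbar)) *
          (‖ψ q‖ ^ 2 * ‖ψ y‖ ^ 2)
      ≤ (d : ℝ) * hbar / 2 * (∫ y in Γ, ‖ψ y‖ ^ 2) ^ 2 +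
        ∫ y in Γ, ∫ q in Γ,
          Metric.infDist (y - q) L ^ 2 * (‖ψ q‖ ^ 2 * ‖ψ y‖ ^ 2) :=
  gaussian_smoothed_cost_bound_general hbar hhbar L hL Γ ψ hψL2
end
end
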